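/- Fix an integer t ≥ 1. For all integers n ≥ 1, p(n,t) equals the number of points x ∈ ℤ^{t+1} such that t divides x_t, x lies in the union ⋃_{m≥1} C_m, and ∑_{i=0}^{t} x_i = n. -/

import Mathlib

/-
The lattice point of a partition is the sum of `v_p` over its parts `p`; the coordinates of `v_p`
add up to `p`, and the last one is a multiple of `t`. If the smallest part is `m`, all parts lie in
`m, …, m + t`, so the point is `∑ c_i v_{m+i}` with `c_i` the multiplicity of `m + i`, and
`c_0 > 0`: it lies in `C_m`.

Everything else comes from the facet normals: `⟨u_k, v_p⟩ = t ⌊(p - 1 - k) / t⌋`. Evaluated at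
`k = m - 1, …, m + t` these give a dual basis to `v_m, …, v_{m+t}` whose values on `ℤ^t × tℤ` are
integers, so the coefficients of a lattice point of `C_m` are natural numbers and are determined by
the point. On `C_m`, `⟨u_k, ·⟩` is antitone in `k`, nonnegative at `k = m - 1` and negative at
`k = m`, so the cones `C_m` are pairwise disjoint and `m` is recovered as well.
-/

/-- The generator `v_i ∈ ℝ^{t+1}`: coordinates `0,…,(i-1) mod t` equal `1`, the remaining
coordinates among `0,…,t-1` equal `0`, and the last coordinate equals `((i-1) div t)·t`. -/
noncomputable def geneV (t : ℕ) (i : ℕ) : Fin (t + 1) → ℝ := fun l =>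
  if (l : ℕ) = t then (((i - 1) / t) * t : ℕ)
  else if (l : ℕ) ≤ (i - 1) % t then 1 else 0

/-- The half-open simplicial cone `C_m`, generated by `v_m, …, v_{m+t}` with the facet
opposite the first generator open. -/
noncomputable def coneC (t : ℕ) (m : ℕ) : Set (Fin (t + 1) → ℝ) :=
  { x | ∃ α : Fin (t + 1) → ℝ, 0 < α 0 ∧ (∀ i, 0 ≤ α i) ∧
      x = ∑ i : Fin (t + 1), α i • geneV t (m + (i : ℕ)) }

/-- The normal vector `u_l = -((l div t)+1)·t·e₀ + t·e_{l mod t} + e_t`. -/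
noncomputable def normalU (t : ℕ) (l : ℕ) : Fin (t + 1) → ℝ := fun j =>
  (if (j : ℕ) = 0 then -(((l / t + 1) * t : ℕ) : ℝ) else 0)
    + (if (j : ℕ) = l % t then (t : ℝ) else 0)
    + (if (j : ℕ) = t then 1 else 0)

/-- Standard inner product on `ℝ^{t+1}`. -/
noncomputable def sprod {n : ℕ} (u x : Fin n → ℝ) : ℝ := ∑ j, u j * x j

/-- `p n t` is the number of (non-empty) partitions of `n` whose difference between
largest and smallest part is at most `t`. -/
noncomputable def boundedDiffCount (n t : ℕ) : ℕ :=
  Nat.card { P : n.Partition // P.parts ≠ 0 ∧ ∀ a ∈ P.parts, ∀ b ∈ P.parts, a ≤ b + t }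

lemma Int.sub_ediv_eq {a k t : ℤ} (ht : 0 < t) :
    (a - k) / t = a / t - k / t - 1 + if k % t ≤ a % t then 1 else 0 := by
  have ha := Int.mul_ediv_add_emod a t
  have hk := Int.mul_ediv_add_emod k t
  have hra := Int.emod_lt_of_pos a ht
  have hrk := Int.emod_lt_of_pos k ht
  have hra' := Int.emod_nonneg a ht.ne'
  have hrk' := Int.emod_nonneg k ht.ne'
  rw [Int.ediv_eq_iff_of_pos ht]
  split_ifs <;> constructor <;> linarith

lemma Int.ediv_eq_ite {a t : ℤ} (ht : 0 < t) (h₁ : -t ≤ a) (h₂ : a ≤ t) :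
    a / t = if a < 0 then -1 else if a = t then 1 else 0 := by
  rw [Int.ediv_eq_iff_of_pos ht]
  split_ifs <;> omega

lemma Fin.sum_ite_val_eq {n : ℕ} {M : Type*} [AddCommMonoid M] (c : ℕ) (hc : c < n)
    (f : Fin n → M) : ∑ j : Fin n, (if (j : ℕ) = c then f j else 0) = f ⟨c, hc⟩ := by
  rw [Finset.sum_eq_single ⟨c, hc⟩] <;> simp +contextual [Fin.ext_iff]

lemma sprod_sum_smul {n : ℕ} {ι : Type*} (u : Fin n → ℝ) (s : Finset ι) (c : ι → ℝ)
    (w : ι → Fin n → ℝ) : sprod u (∑ i ∈ s, c i • w i) = ∑ i ∈ s, c i * sprod u (w i) := by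
  simp only [sprod, Finset.sum_apply, Pi.smul_apply, smul_eq_mul, Finset.mul_sum]
  rw [Finset.sum_comm]
  exact Finset.sum_congr rfl fun _ _ => Finset.sum_congr rfl fun _ _ => by ring

lemma sprod_normalU_geneV {t : ℕ} (ht : 0 < t) (k p : ℕ) :
    sprod (normalU t k) (geneV t p) = t * ((((p - 1 : ℕ) : ℤ) - k) / t : ℤ) := by
  have hkt : k % t < t := Nat.mod_lt k ht
  simp only [sprod, normalU, add_mul, ite_mul, zero_mul, Finset.sum_add_distrib,
    Fin.sum_ite_val_eq 0 (Nat.succ_pos t), Fin.sum_ite_val_eq (k % t) (by omega : k % t < t + 1),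
    Fin.sum_ite_val_eq t (Nat.lt_succ_self t)]
  rw [Int.sub_ediv_eq (by exact_mod_cast ht)]
  simp only [geneV, if_neg ht.ne, if_neg hkt.ne, if_pos (Nat.zero_le _), ← Int.natCast_ediv,
    ← Int.natCast_mod, Nat.cast_le]
  split_ifs <;> simp only [Int.cast_add, Int.cast_sub, Int.cast_one, Int.cast_zero,
    Int.cast_natCast, Nat.cast_add, Nat.cast_mul] <;> ring

section Cone

variable {t m : ℕ}

noncomputable def facetCoord (t m : ℕ) (x : Fin (t + 1) → ℝ) (s : ℕ) : ℝ :=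
  sprod (normalU t (m - 1 + s)) x / t

noncomputable def coneCoeff (t m : ℕ) (x : Fin (t + 1) → ℝ) (j : Fin (t + 1)) : ℝ :=
  if (j : ℕ) = t then facetCoord t m x 0
  else if (j : ℕ) = 0 then -facetCoord t m x 1
  else facetCoord t m x j - facetCoord t m x (j + 1)

lemma facetCoord_coneSum (ht : 0 < t) (hm : 1 ≤ m) (α : Fin (t + 1) → ℝ) (s : ℕ) :
    facetCoord t m (∑ i, α i • geneV t (m + i)) s = ∑ i, α i * (((i : ℤ) - s) / t : ℤ) := by
  simp only [facetCoord, sprod_sum_smul, sprod_normalU_geneV ht, Finset.sum_div]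
  refine Finset.sum_congr rfl fun i _ => ?_
  have hi : ((m + i - 1 : ℕ) : ℤ) - (m - 1 + s : ℕ) = (i : ℤ) - s := by omega
  rw [hi]
  field_simp

lemma facetCoord_coneSum_zero (ht : 0 < t) (hm : 1 ≤ m) (α : Fin (t + 1) → ℝ) :
    facetCoord t m (∑ i, α i • geneV t (m + i)) 0 = α (Fin.last t) := by
  have key : ∀ i : Fin (t + 1),
      (((i : ℤ) - (0 : ℕ)) / t : ℤ) = if i = Fin.last t then 1 else 0 := by
    intro i
    have := i.isLt
    rw [Int.ediv_eq_ite (by omega) (by omega) (by omega)]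
    simp only [Fin.ext_iff, Fin.val_last]
    split_ifs <;> omega
  rw [facetCoord_coneSum ht hm]
  simp only [key]
  simp

lemma facetCoord_coneSum_one (ht : 0 < t) (hm : 1 ≤ m) (α : Fin (t + 1) → ℝ) :
    facetCoord t m (∑ i, α i • geneV t (m + i)) 1 = -α 0 := by
  have key : ∀ i : Fin (t + 1),
      (((i : ℤ) - (1 : ℕ)) / t : ℤ) = if i = 0 then -1 else 0 := by
    intro i
    have := i.isLt
    rw [Int.ediv_eq_ite (by omega) (by omega) (by omega)]
    simp only [Fin.ext_iff, Fin.val_zero]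
    split_ifs <;> omega
  rw [facetCoord_coneSum ht hm]
  simp only [key]
  simp

lemma facetCoord_coneSum_sub_succ (ht : 0 < t) (hm : 1 ≤ m) (α : Fin (t + 1) → ℝ)
    {j : Fin (t + 1)} (hj₀ : (j : ℕ) ≠ 0) (hjt : (j : ℕ) ≠ t) :
    facetCoord t m (∑ i, α i • geneV t (m + i)) j
      - facetCoord t m (∑ i, α i • geneV t (m + i)) (j + 1) = α j := by
  have key : ∀ i : Fin (t + 1),
      (((i : ℤ) - (j : ℕ)) / t : ℤ) - (((i : ℤ) - (j + 1 : ℕ)) / t : ℤ)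
        = if i = j then 1 else 0 := by
    intro i
    have := i.isLt
    have := j.isLt
    rw [Int.ediv_eq_ite (by omega) (by omega) (by omega),
      Int.ediv_eq_ite (by omega) (by omega) (by omega)]
    simp only [Fin.ext_iff]
    split_ifs <;> omega
  rw [facetCoord_coneSum ht hm, facetCoord_coneSum ht hm, ← Finset.sum_sub_distrib]
  simp only [← mul_sub, ← Int.cast_sub, key]
  simp

lemma coneCoeff_coneSum (ht : 0 < t) (hm : 1 ≤ m) (α : Fin (t + 1) → ℝ) :
    coneCoeff t m (∑ i, α i • geneV t (m + i)) = α := by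
  funext j
  unfold coneCoeff
  split_ifs with hjt hj₀
  · rw [facetCoord_coneSum_zero ht hm, show j = Fin.last t from Fin.ext hjt]
  · rw [facetCoord_coneSum_one ht hm, neg_neg, show j = 0 from Fin.ext hj₀]
  · exact facetCoord_coneSum_sub_succ ht hm α hj₀ hjt

lemma coneSum_injective (ht : 0 < t) (hm : 1 ≤ m) :
    Function.Injective fun α : Fin (t + 1) → ℝ => ∑ i, α i • geneV t (m + i) :=
  Function.LeftInverse.injective (g := coneCoeff t m) (coneCoeff_coneSum ht hm)

lemma facetCoord_coneSum_antitone (ht : 0 < t) (hm : 1 ≤ m) {α : Fin (t + 1) → ℝ}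
    (hα : ∀ i, 0 ≤ α i) : Antitone (facetCoord t m (∑ i, α i • geneV t (m + i))) := by
  intro s s' hs
  simp only [facetCoord_coneSum ht hm]
  refine Finset.sum_le_sum fun i _ => mul_le_mul_of_nonneg_left ?_ (hα i)
  exact_mod_cast Int.ediv_le_ediv (c := (t : ℤ)) (by omega)
    (show (i : ℤ) - (s' : ℕ) ≤ (i : ℤ) - (s : ℕ) by omega)

lemma eq_of_mem_coneC (ht : 0 < t) {m' : ℕ} {x : Fin (t + 1) → ℝ} (hm : 1 ≤ m) (hm' : 1 ≤ m')
    (h : x ∈ coneC t m) (h' : x ∈ coneC t m') : m = m' := by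
  wlog hle : m ≤ m' generalizing m m'
  · exact (this hm' hm h' h (by omega)).symm
  by_contra hne
  obtain ⟨α, hα₀, hα, rfl⟩ := h
  obtain ⟨β, -, hβ, hx⟩ := h'
  have hshift : facetCoord t m' (∑ i, α i • geneV t (m + i)) 0
      = facetCoord t m (∑ i, α i • geneV t (m + i)) (m' - m) := by
    unfold facetCoord
    congr 3
    omega
  have hlow : 0 ≤ facetCoord t m' (∑ i, α i • geneV t (m + i)) 0 := by
    rw [hx, facetCoord_coneSum_zero ht hm']
    exact hβ _
  have hhigh := facetCoord_coneSum_antitone ht hm hα (show 1 ≤ m' - m by omega)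
  rw [facetCoord_coneSum_one ht hm] at hhigh
  linarith

end Cone

section Integrality

variable {t m : ℕ}

lemma exists_sprod_normalU_intCast_eq (ht : 0 < t) {x : Fin (t + 1) → ℤ}
    (hx : (t : ℤ) ∣ x (Fin.last t)) (k : ℕ) :
    ∃ z : ℤ, sprod (normalU t k) (fun j => (x j : ℝ)) = t * z := by
  obtain ⟨q, hq⟩ := hx
  have hkt : k % t < t := Nat.mod_lt k ht
  refine ⟨-((k / t + 1 : ℕ) : ℤ) * x ⟨0, Nat.succ_pos t⟩ + x ⟨k % t, by omega⟩ + q, ?_⟩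
  have hlast : ((x ⟨t, Nat.lt_succ_self t⟩ : ℤ) : ℝ) = t * q := by exact_mod_cast hq
  simp only [sprod, normalU, add_mul, ite_mul, zero_mul, Finset.sum_add_distrib,
    Fin.sum_ite_val_eq 0 (Nat.succ_pos t), Fin.sum_ite_val_eq (k % t) (by omega : k % t < t + 1),
    Fin.sum_ite_val_eq t (Nat.lt_succ_self t), hlast, Int.cast_add, Int.cast_mul, Int.cast_neg,
    Int.cast_natCast]
  push_cast
  ring

lemma exists_facetCoord_intCast_eq (ht : 0 < t) {x : Fin (t + 1) → ℤ}
    (hx : (t : ℤ) ∣ x (Fin.last t)) (s : ℕ) :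
    ∃ z : ℤ, facetCoord t m (fun j => (x j : ℝ)) s = z := by
  obtain ⟨z, hz⟩ := exists_sprod_normalU_intCast_eq ht hx (m - 1 + s)
  refine ⟨z, ?_⟩
  rw [facetCoord, hz]
  field_simp

lemma exists_coneCoeff_intCast_eq (ht : 0 < t) {x : Fin (t + 1) → ℤ}
    (hx : (t : ℤ) ∣ x (Fin.last t)) (j : Fin (t + 1)) :
    ∃ z : ℤ, coneCoeff t m (fun j => (x j : ℝ)) j = z := by
  have hint := exists_facetCoord_intCast_eq (m := m) ht hx
  obtain ⟨z₀, hz₀⟩ := hint 0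
  obtain ⟨z₁, hz₁⟩ := hint 1
  obtain ⟨zj, hzj⟩ := hint j
  obtain ⟨zj', hzj'⟩ := hint (j + 1)
  unfold coneCoeff
  split_ifs
  · exact ⟨z₀, hz₀⟩
  · exact ⟨-z₁, by rw [hz₁]; push_cast; ring⟩
  · exact ⟨zj - zj', by rw [hzj, hzj']; push_cast; ring⟩

lemma exists_nat_coeff_of_mem_coneC (ht : 0 < t) (hm : 1 ≤ m) {x : Fin (t + 1) → ℤ}
    (hx : (t : ℤ) ∣ x (Fin.last t)) (hcone : (fun j => (x j : ℝ)) ∈ coneC t m) :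
    ∃ c : Fin (t + 1) → ℕ, 0 < c 0 ∧
      (fun j => (x j : ℝ)) = ∑ i, (c i : ℝ) • geneV t (m + i) := by
  obtain ⟨α, hα₀, hα, hxα⟩ := hcone
  have hcoeff : ∀ j, ∃ c : ℕ, α j = c := by
    intro j
    obtain ⟨z, hz⟩ := exists_coneCoeff_intCast_eq (m := m) ht hx j
    rw [hxα, coneCoeff_coneSum ht hm] at hz
    have hz₀ : 0 ≤ z := by exact_mod_cast hz ▸ hα j
    exact ⟨z.toNat, by rw [hz]; exact_mod_cast (Int.toNat_of_nonneg hz₀).symm⟩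
  choose c hc using hcoeff
  refine ⟨c, by exact_mod_cast hc 0 ▸ hα₀, ?_⟩
  rw [hxα]
  simp only [hc]

end Integrality

def geneVInt (t : ℕ) (i : ℕ) : Fin (t + 1) → ℤ := fun l =>
  if (l : ℕ) = t then (((i - 1) / t) * t : ℕ)
  else if (l : ℕ) ≤ (i - 1) % t then 1 else 0

def latticePoint (t : ℕ) (S : Multiset ℕ) : Fin (t + 1) → ℤ :=
  (S.map (geneVInt t)).sum

def windowMultiset {t : ℕ} (m : ℕ) (c : Fin (t + 1) → ℕ) : Multiset ℕ :=
  ∑ j, Multiset.replicate (c j) (m + j)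

section Lattice

variable {t : ℕ}

lemma intCast_geneVInt (p : ℕ) : (fun l => (geneVInt t p l : ℝ)) = geneV t p := by
  funext l
  unfold geneVInt geneV
  split_ifs <;> norm_cast

lemma sum_geneVInt (ht : 0 < t) {p : ℕ} (hp : 1 ≤ p) : ∑ l, geneVInt t p l = p := by
  have hr : (p - 1) % t < t := Nat.mod_lt _ ht
  have hfilter : (Finset.range t).filter (· ≤ (p - 1) % t) = Finset.range ((p - 1) % t + 1) := by
    ext l
    simp only [Finset.mem_filter, Finset.mem_range]
    omega
  rw [Fin.sum_univ_castSucc]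
  simp only [geneVInt, Fin.val_castSucc, Fin.val_last, if_pos, (Fin.is_lt _).ne, if_false]
  rw [Fin.sum_univ_eq_sum_range (fun l => if l ≤ (p - 1) % t then (1 : ℤ) else 0) t,
    Finset.sum_ite, Finset.sum_const_zero, Finset.sum_const, hfilter, Finset.card_range]
  have := Nat.div_add_mod' (p - 1) t
  simp only [nsmul_eq_mul, mul_one, add_zero]
  exact_mod_cast (by omega : (p - 1) % t + 1 + (p - 1) / t * t = p)

lemma intCast_latticePoint (S : Multiset ℕ) :
    (fun l => (latticePoint t S l : ℝ)) = (S.map (geneV t)).sum := by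
  induction S using Multiset.induction_on with
  | empty => funext l; simp [latticePoint]
  | cons p S ih =>
    funext l
    have := congrFun ih l
    simp only [latticePoint, Multiset.map_cons, Multiset.sum_cons, Pi.add_apply, Int.cast_add]
      at this ⊢
    rw [this, ← intCast_geneVInt p]

lemma dvd_latticePoint_last (S : Multiset ℕ) : (t : ℤ) ∣ latticePoint t S (Fin.last t) := by
  induction S using Multiset.induction_on with
  | empty => simp [latticePoint]
  | cons p S ih =>
    simp only [latticePoint, Multiset.map_cons, Multiset.sum_cons, Pi.add_apply] at ih ⊢
    refine dvd_add ?_ ih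
    simp [geneVInt]

lemma sum_latticePoint (ht : 0 < t) {S : Multiset ℕ} (hS : ∀ p ∈ S, 1 ≤ p) :
    ∑ l, latticePoint t S l = S.sum := by
  induction S using Multiset.induction_on with
  | empty => simp [latticePoint]
  | cons p S ih =>
    simp only [Multiset.mem_cons, forall_eq_or_imp] at hS
    simp only [latticePoint, Multiset.map_cons, Multiset.sum_cons, Pi.add_apply,
      Finset.sum_add_distrib, Nat.cast_add] at ih ⊢
    rw [sum_geneVInt ht hS.1, ih hS.2]

end Lattice

section Window

variable {t m : ℕ}

lemma count_windowMultiset (c : Fin (t + 1) → ℕ) (j : Fin (t + 1)) :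
    (windowMultiset m c).count (m + j) = c j := by
  simp only [windowMultiset, Multiset.count_sum', Multiset.count_replicate, add_right_inj,
    ← Fin.ext_iff, Finset.sum_ite_eq', Finset.mem_univ, if_true]

lemma mem_windowMultiset {c : Fin (t + 1) → ℕ} {a : ℕ} (ha : a ∈ windowMultiset m c) :
    m ≤ a ∧ a ≤ m + t := by
  obtain ⟨j, -, hj⟩ := Multiset.mem_sum.mp ha
  have := j.isLt
  have := Multiset.eq_of_mem_replicate hj
  omega

lemma eq_windowMultiset_count {S : Multiset ℕ} (hS : ∀ a ∈ S, m ≤ a ∧ a ≤ m + t) :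
    S = windowMultiset m fun j : Fin (t + 1) => S.count (m + j) := by
  ext a
  by_cases ha : m ≤ a ∧ a ≤ m + t
  · obtain ⟨d, rfl⟩ := Nat.exists_eq_add_of_le ha.1
    exact (count_windowMultiset (fun j : Fin (t + 1) => S.count (m + j)) ⟨d, by omega⟩).symm
  · rw [Multiset.count_eq_zero.mpr fun h => ha (hS a h),
      Multiset.count_eq_zero.mpr fun h => ha (mem_windowMultiset h)]

lemma sum_map_windowMultiset {M : Type*} [AddCommMonoid M] (c : Fin (t + 1) → ℕ) (f : ℕ → M) :
    ((windowMultiset m c).map f).sum = ∑ j, c j • f (m + j) := by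
  rw [windowMultiset, ← Multiset.mapAddMonoidHom_apply, map_sum, Multiset.sum_sum]
  simp only [Multiset.mapAddMonoidHom_apply, Multiset.map_replicate, Multiset.sum_replicate]

lemma sum_map_geneV_of_window {S : Multiset ℕ} (hS : ∀ a ∈ S, m ≤ a ∧ a ≤ m + t) :
    (S.map (geneV t)).sum = ∑ j : Fin (t + 1), (S.count (m + j) : ℝ) • geneV t (m + j) := by
  conv_lhs => rw [eq_windowMultiset_count hS]
  simp only [sum_map_windowMultiset, Nat.cast_smul_eq_nsmul]

lemma sum_map_geneV_mem_coneC {S : Multiset ℕ} (hS : ∀ a ∈ S, m ≤ a ∧ a ≤ m + t) (hm : m ∈ S) :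
    (S.map (geneV t)).sum ∈ coneC t m :=
  ⟨fun j => S.count (m + j), by simpa using Multiset.count_pos.mpr hm, fun _ => Nat.cast_nonneg _,
    sum_map_geneV_of_window hS⟩

end Window

abbrev BoundedDiffPartition (n t : ℕ) :=
  { P : n.Partition // P.parts ≠ 0 ∧ ∀ a ∈ P.parts, ∀ b ∈ P.parts, a ≤ b + t }

namespace BoundedDiffPartition

variable {n t : ℕ}

lemma exists_window (P : BoundedDiffPartition n t) :
    ∃ m, 1 ≤ m ∧ m ∈ P.1.parts ∧ ∀ a ∈ P.1.parts, m ≤ a ∧ a ≤ m + t := by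
  obtain ⟨m, hm, hmin⟩ := Multiset.exists_min_image id P.2.1
  exact ⟨m, P.1.parts_pos hm, hm, fun a ha => ⟨hmin a ha, P.2.2 a ha m hm⟩⟩

lemma exists_latticePoint_mem_coneC (P : BoundedDiffPartition n t) :
    ∃ m, 1 ≤ m ∧ (fun l => (latticePoint t P.1.parts l : ℝ)) ∈ coneC t m := by
  obtain ⟨m, hm, hmP, hwin⟩ := P.exists_window
  exact ⟨m, hm, intCast_latticePoint P.1.parts ▸ sum_map_geneV_mem_coneC hwin hmP⟩

lemma sum_latticePoint_parts (ht : 0 < t) (P : BoundedDiffPartition n t) :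
    ∑ l, latticePoint t P.1.parts l = n := by
  rw [sum_latticePoint ht fun p hp => P.1.parts_pos hp, P.1.parts_sum]

lemma latticePoint_injective (ht : 0 < t) :
    Function.Injective fun P : BoundedDiffPartition n t => latticePoint t P.1.parts := by
  intro P Q hPQ
  obtain ⟨m, hm, hmP, hP⟩ := P.exists_window
  obtain ⟨m', hm', hmQ, hQ⟩ := Q.exists_window
  have hsum : (P.1.parts.map (geneV t)).sum = (Q.1.parts.map (geneV t)).sum := by
    rw [← intCast_latticePoint, ← intCast_latticePoint]
    exact congrArg (fun x l => (x l : ℝ)) hPQ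
  obtain rfl : m = m' := eq_of_mem_coneC ht hm hm' (sum_map_geneV_mem_coneC hP hmP)
    (hsum ▸ sum_map_geneV_mem_coneC hQ hmQ)
  rw [sum_map_geneV_of_window hP, sum_map_geneV_of_window hQ] at hsum
  have hcount := congrFun (coneSum_injective ht hm hsum)
  refine Subtype.ext (Nat.Partition.ext ?_)
  rw [eq_windowMultiset_count hP, eq_windowMultiset_count hQ]
  exact congrArg _ (funext fun j => by exact_mod_cast hcount j)

lemma exists_latticePoint_eq (ht : 0 < t) {m : ℕ} (hm : 1 ≤ m) {x : Fin (t + 1) → ℤ}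
    (hx : (t : ℤ) ∣ x (Fin.last t)) (hcone : (fun j => (x j : ℝ)) ∈ coneC t m)
    (hsum : ∑ i, x i = (n : ℤ)) :
    ∃ P : BoundedDiffPartition n t, latticePoint t P.1.parts = x := by
  obtain ⟨c, hc₀, hxc⟩ := exists_nat_coeff_of_mem_coneC ht hm hx hcone
  set S := windowMultiset m c
  have hwin : ∀ a ∈ S, m ≤ a ∧ a ≤ m + t := fun a => mem_windowMultiset
  have hmS : m ∈ S := Multiset.count_pos.mp (by simpa [S] using count_windowMultiset c 0 ▸ hc₀)
  have hS : latticePoint t S = x := by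
    have hreal : (fun l => (latticePoint t S l : ℝ)) = fun l => (x l : ℝ) := by
      rw [intCast_latticePoint, sum_map_geneV_of_window hwin, hxc]
      simp only [S, count_windowMultiset]
    exact funext fun l => by exact_mod_cast congrFun hreal l
  have hSsum : S.sum = n := by
    have := sum_latticePoint ht fun p hp => (show 1 ≤ p by have := hwin p hp; omega)
    rw [hS, hsum] at this
    exact_mod_cast this.symm
  refine ⟨⟨⟨S, fun hp => by have := hwin _ hp; omega, hSsum⟩,
    fun h => Multiset.notMem_zero m (h ▸ hmS), fun a ha b hb => ?_⟩, hS⟩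
  have := hwin a ha
  have := hwin b hb
  omega

end BoundedDiffPartition

theorem bounded_diff_count_eq_lattice_point_count_general (t : ℕ) (ht : 1 ≤ t) (n : ℕ) :
    boundedDiffCount n t
      = Nat.card { x : Fin (t + 1) → ℤ //
          (t : ℤ) ∣ x (Fin.last t) ∧
          (∃ m : ℕ, 1 ≤ m ∧ (fun j => (x j : ℝ)) ∈ coneC t m) ∧
          ∑ i, x i = (n : ℤ) } := by
  refine Nat.card_congr (Equiv.ofBijective
    (fun P : BoundedDiffPartition n t => ⟨latticePoint t P.1.parts, dvd_latticePoint_last _,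
      P.exists_latticePoint_mem_coneC, P.sum_latticePoint_parts ht⟩) ⟨?_, ?_⟩)
  · exact fun P Q h => BoundedDiffPartition.latticePoint_injective ht (congrArg Subtype.val h)
  · rintro ⟨x, hx, ⟨m, hm, hcone⟩, hsum⟩
    obtain ⟨P, hP⟩ := BoundedDiffPartition.exists_latticePoint_eq ht hm hx hcone hsum
    exact ⟨P, Subtype.ext hP⟩

/-- `p(n,t)` equals the number of lattice points `x ∈ ℤ^{t+1}` with `t ∣ x_t` lying in
`⋃_{m≥1} C_m` at height `n`. -/
theorem bounded_diff_count_eq_lattice_point_count (t : ℕ) (ht : 1 ≤ t) (n : ℕ) (hn : 1 ≤ n) :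
    boundedDiffCount n t
      = Nat.card { x : Fin (t + 1) → ℤ //
          (t : ℤ) ∣ x (Fin.last t) ∧
          (∃ m : ℕ, 1 ≤ m ∧ (fun j => (x j : ℝ)) ∈ coneC t m) ∧
          ∑ i, x i = (n : ℤ) } :=
  bounded_diff_count_eq_lattice_point_count_general t ht n
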